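/- Let (G,G') be a pair that admits a representation and satisfies (P2), and let e ∈ E(G') be contractible. Then the contracted pair (G,G')/e satisfies (P2). -/

import Mathlib

/-!
Let `{p, q}` be the contracted edge and `r` the `P₄`-neighbour of the merged vertex in an
induced `(K₄, P₄)` of the contracted pair. Replace the merged vertex by the endpoint `s` of the
edge with `s r ∈ E(G')`, and let `t` be the other endpoint. Contractibility gives `t r ∉ E(G)`,
and the only way the lift can fail is a vertex `v` of the quadruple with `t v ∈ E(G)`,
`s v ∉ E(G)`. Then `P_r` meets `P_s` but not `P_t`, `P_v` meets `P_t` but not `P_s`, and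
`P_r`, `P_v` meet. In the host tree, the path from an edge of `P_r ∩ P_s` to one of
`P_v ∩ P_t` runs inside both `P_r ∪ P_v` and `P_s ∪ P_t`, so it has a vertex carrying an edge
of `P_s` not in `P_t` and an edge of `P_t` not in `P_s`. Since `P_s ∼ P_t` this vertex has no
third neighbour in `P_s ∪ P_t`, yet the tree path from it to the common edge of `P_s` and
`P_t` starts with an edge of both.
-/

open SimpleGraph

namespace ENPT

variable {β V W U : Type}

/-- A graph on a subset of `β`, modeled as a subgraph of the complete graph on `β`. -/
abbrev SubG (β : Type) := SimpleGraph.Subgraph (⊤ : SimpleGraph β)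

/-- `H` is a path: connected, with at least one edge, and maximum degree 2. -/
def IsPathSub (H : SubG β) : Prop :=
  H.Connected ∧ H.edgeSet.Nonempty ∧ ∀ v : β, (H.neighborSet v).ncard ≤ 2

/-- The split vertices of two subgraphs: vertices of degree at least 3 in their union. -/
def Split (P Q : SubG β) : Set β := {v | 3 ≤ ((P ⊔ Q).neighborSet v).ncard}

/-- Two subgraphs edge-intersect. -/
def EdgeInt (P Q : SubG β) : Prop := (P.edgeSet ∩ Q.edgeSet).Nonempty

lemma EdgeInt.symm {P Q : SubG β} (h : EdgeInt P Q) : EdgeInt Q P := by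
  unfold EdgeInt at h ⊢; rwa [Set.inter_comm]

lemma Split_comm (P Q : SubG β) : Split P Q = Split Q P := by
  unfold Split; rw [sup_comm]

/-- `P ∼ Q` : edge-intersecting and non-splitting. -/
def NonSplit (P Q : SubG β) : Prop := EdgeInt P Q ∧ Split P Q = ∅

lemma NonSplit.symm {P Q : SubG β} (h : NonSplit P Q) : NonSplit Q P :=
  ⟨h.1.symm, by rw [Split_comm]; exact h.2⟩

/-- The EPT graph of a family of paths. -/
def EPTg (Ps : V → SubG β) : SimpleGraph V where
  Adj u v := u ≠ v ∧ EdgeInt (Ps u) (Ps v)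
  symm := ⟨fun u v h => ⟨Ne.symm h.1, h.2.symm⟩⟩
  loopless := ⟨fun u h => h.1 rfl⟩

/-- The ENPT graph of a family of paths. -/
def ENPTg (Ps : V → SubG β) : SimpleGraph V where
  Adj u v := u ≠ v ∧ NonSplit (Ps u) (Ps v)
  symm := ⟨fun u v h => ⟨Ne.symm h.1, h.2.symm⟩⟩
  loopless := ⟨fun u h => h.1 rfl⟩

/-- `⟨T, Ps⟩` is a representation of the pair `(G, G')`. -/
structure IsRep (T : SubG β) (Ps : V → SubG β) (G G' : SimpleGraph V) : Prop where
  tree : T.coe.IsTree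
  sub : ∀ v, Ps v ≤ T
  path : ∀ v, IsPathSub (Ps v)
  ept : EPTg Ps = G
  enpt : ENPTg Ps = G'

/-- Property (P3) of a representation: no red edge-clique of size 3. -/
def SatP3 (Ps : V → SubG β) : Prop :=
  ¬ ∃ (e : Sym2 β) (p q r : V), p ≠ q ∧ p ≠ r ∧ q ≠ r ∧
    e ∈ (Ps p).edgeSet ∧ e ∈ (Ps q).edgeSet ∧ e ∈ (Ps r).edgeSet ∧
    (Split (Ps p) (Ps q)).Nonempty ∧ (Split (Ps p) (Ps r)).Nonempty ∧
    (Split (Ps q) (Ps r)).Nonempty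

/-- The map merging `q` into `p`. -/
def mergeMap [DecidableEq V] (p q : V) : V → V := fun x => if x = q then p else x

/-- The image of a subgraph under the merge of `b` into `a` (contraction of `{a,b}`). -/
def cImage [DecidableEq β] (a b : β) (H : SubG β) : SubG β where
  verts := mergeMap a b '' H.verts
  Adj x y := x ≠ y ∧ ∃ x' y', H.Adj x' y' ∧ x = mergeMap a b x' ∧ y = mergeMap a b y'
  adj_sub := by
    rintro x y ⟨h, -⟩
    exact h
  edge_vert := by
    rintro x y ⟨h, x', y', hadj, rfl, rfl⟩
    exact ⟨x', H.edge_vert hadj, rfl⟩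
  symm := by
    constructor
    rintro x y ⟨h, x', y', hadj, rfl, rfl⟩
    exact ⟨h.symm, y', x', hadj.symm, rfl, rfl⟩

/-- Delete from `H` the vertex `x` and all edges at `x` (used for tail removal). -/
def delTail (x : β) (H : SubG β) : SubG β where
  verts := H.verts \ {x}
  Adj u w := H.Adj u w ∧ u ≠ x ∧ w ≠ x
  adj_sub := fun h => H.adj_sub h.1
  edge_vert := by
    rintro u w ⟨h, hu, hw⟩
    exact ⟨H.edge_vert h, by simpa using hu⟩
  symm := by
    constructor
    rintro u w ⟨h, hu, hw⟩
    exact ⟨h.symm, hw, hu⟩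

/-- A pair `⟨tree, family of paths⟩`. -/
structure Rep (β V : Type) where
  T : SubG β
  P : V → SubG β

/-- Well-formedness: the tree is a tree and each member of the family is a path of it. -/
def Rep.WF (R : Rep β V) : Prop :=
  R.T.coe.IsTree ∧ (∀ v, R.P v ≤ R.T) ∧ ∀ v, IsPathSub (R.P v)

/-- `R` is a representation of the pair `(G, G')`. -/
def Rep.IsRepOf (R : Rep β V) (G G' : SimpleGraph V) : Prop := IsRep R.T R.P G G'

/-- A single minifying operation: contraction of a tree edge, or removal of a tail of
one of the paths. -/
inductive MinifyStep [DecidableEq β] [DecidableEq V] : Rep β V → Rep β V → Prop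
  | contract (R : Rep β V) (a b : β) (hab : R.T.Adj a b)
      (hkeep : ∀ v, (cImage a b (R.P v)).edgeSet.Nonempty) :
      MinifyStep R ⟨cImage a b R.T, fun v => cImage a b (R.P v)⟩
  | tail (R : Rep β V) (v₀ : V) (x y : β) (hxy : (R.P v₀).Adj x y)
      (hdeg : ((R.P v₀).neighborSet x).ncard = 1)
      (htwo : 2 ≤ (R.P v₀).edgeSet.ncard) :
      MinifyStep R ⟨R.T, Function.update R.P v₀ (delTail x (R.P v₀))⟩

/-- A minimal representation of `(G, G')`: no single minifying operation yields again a
representation of `(G, G')`. -/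
def IsMinimalRep [DecidableEq β] [DecidableEq V] (T : SubG β) (Ps : V → SubG β)
    (G G' : SimpleGraph V) : Prop :=
  IsRep T Ps G G' ∧ ∀ R' : Rep β V, MinifyStep ⟨T, Ps⟩ R' → ¬ R'.IsRepOf G G'

/-- The cycle on `ZMod n`, vertices labeled in cyclic order. -/
def cycleG (n : ℕ) : SimpleGraph (ZMod n) :=
  SimpleGraph.fromRel (fun i j => j = i + 1)

/-- Property (P2) of a pair: no four vertices inducing a `K4` in `G` and a `P4` in `G'`. -/
def NoK4P4 (G G' : SimpleGraph V) : Prop :=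
  ¬ ∃ a b c d : V,
    G.Adj a b ∧ G.Adj a c ∧ G.Adj a d ∧ G.Adj b c ∧ G.Adj b d ∧ G.Adj c d ∧
    G'.Adj a b ∧ G'.Adj b c ∧ G'.Adj c d ∧ ¬G'.Adj a c ∧ ¬G'.Adj a d ∧ ¬G'.Adj b d

/-- The contraction `G/e` of the edge `e = {p,q}`, merging `q` into `p`,
realized on the vertex set `V ∖ {q}`. -/
def contrG [DecidableEq V] (G : SimpleGraph V) (p q : V) : SimpleGraph {x : V // x ≠ q} where
  Adj a b := a ≠ b ∧ ∃ x y : V, G.Adj x y ∧ (a : V) = mergeMap p q x ∧ (b : V) = mergeMap p q y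
  symm := by
    constructor
    rintro a b ⟨h, x, y, hxy, hx, hy⟩
    exact ⟨h.symm, y, x, hxy.symm, hy, hx⟩
  loopless := by constructor; rintro a ⟨h, -⟩; exact h rfl

/-- The contractibility condition for the edge `{p,q}` in the pair `(G,G')`:
no edge of `G'` sharing exactly one endpoint with `{p,q}` closes a triangle of `G`. -/
def ContractibleCond (G G' : SimpleGraph V) (p q : V) : Prop :=
  ∀ r : V, (G'.Adj p r → r ≠ q → ¬ G.Adj q r) ∧ (G'.Adj q r → r ≠ p → ¬ G.Adj p r)

/-- `{p,q}` is a contractible edge of the pair `(G,G')`. -/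
def ContractibleEdge (G G' : SimpleGraph V) (p q : V) : Prop :=
  G'.Adj p q ∧ ContractibleCond G G' p q

/-- `core` is a path between the two (distinct) endpoints `u` and `v`. -/
def IsPathBetween (core : SubG β) (u v : β) : Prop :=
  IsPathSub core ∧ u ∈ core.verts ∧ v ∈ core.verts ∧
    ∀ w ∈ core.verts, ((core.neighborSet w).ncard = 1 ↔ (w = u ∨ w = v))

/-- Delete a set of edges from a subgraph (keeping the vertices). -/
def delEdgesSub (H : SubG β) (s : Set (Sym2 β)) : SubG β where
  verts := H.verts
  Adj x y := H.Adj x y ∧ s(x, y) ∉ s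
  adj_sub := fun h => H.adj_sub h.1
  edge_vert := fun h => H.edge_vert h.1
  symm := by
    constructor
    rintro x y ⟨h, hs⟩
    refine ⟨h.symm, ?_⟩
    rwa [Sym2.eq_swap]

/-- The join of two graphs. -/
def joinG (H : SimpleGraph W) (K : SimpleGraph U) : SimpleGraph (W ⊕ U) where
  Adj x y :=
    match x, y with
    | Sum.inl a, Sum.inl b => H.Adj a b
    | Sum.inr a, Sum.inr b => K.Adj a b
    | Sum.inl _, Sum.inr _ => True
    | Sum.inr _, Sum.inl _ => True
  symm := by
    constructor
    rintro (a | a) (b | b) h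
    · exact h.symm
    · trivial
    · trivial
    · exact h.symm
  loopless := by
    constructor
    rintro (a | a) h
    · exact H.irrefl h
    · exact K.irrefl h

/-- The component graph `comp(G,C,K)`: vertices are the connected components of the
subgraph of `G` induced on the complement of `K`, two components being adjacent iff some
vertex of `K` is adjacent in `C` to both of them. -/
def compGraph (G C : SimpleGraph V) (K : Set V) :
    SimpleGraph (SimpleGraph.induce (Kᶜ : Set V) G).ConnectedComponent where
  Adj A B := A ≠ B ∧ ∃ v ∈ K, ∃ a b : (Kᶜ : Set V),
    C.Adj v (a : V) ∧ C.Adj v (b : V) ∧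
    (SimpleGraph.induce (Kᶜ : Set V) G).connectedComponentMk a = A ∧
    (SimpleGraph.induce (Kᶜ : Set V) G).connectedComponentMk b = B
  symm := by
    constructor
    rintro A B ⟨h, v, hv, a, b, h1, h2, h3, h4⟩
    exact ⟨h.symm, v, hv, b, a, h2, h1, h4, h3⟩
  loopless := by constructor; rintro A ⟨h, -⟩; exact h rfl

/-- The map merging both endpoints of an edge into the smaller one. -/
def minMerge [LinearOrder V] (a b : V) : V → V :=
  fun x => if x = a ∨ x = b then min a b else x

/-- Contraction of the edge `{a,b}` of a graph, the merged vertex being named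
`min a b` (the other endpoint remains as an isolated vertex). -/
def contrMin [LinearOrder V] (G : SimpleGraph V) (a b : V) : SimpleGraph V where
  Adj x y := x ≠ y ∧ ∃ x' y', G.Adj x' y' ∧ x = minMerge a b x' ∧ y = minMerge a b y'
  symm := by
    constructor
    rintro x y ⟨h, x', y', hxy, hx, hy⟩
    exact ⟨h.symm, y', x', hxy.symm, hy, hx⟩
  loopless := by constructor; rintro x ⟨h, -⟩; exact h rfl

/-- Simultaneous contraction in a pair of graphs. -/
def stepPair [LinearOrder V] (GG : SimpleGraph V × SimpleGraph V) (e : V × V) :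
    SimpleGraph V × SimpleGraph V :=
  (contrMin GG.1 e.1 e.2, contrMin GG.2 e.1 e.2)

/-- Iterated contraction of a list of edges (given by their original names; `f` is the
accumulated merging map). -/
def contractGo [LinearOrder V] (f : V → V) (GG : SimpleGraph V × SimpleGraph V) :
    List (V × V) → SimpleGraph V × SimpleGraph V
  | [] => GG
  | e :: l => contractGo (minMerge (f e.1) (f e.2) ∘ f) (stepPair GG (f e.1, f e.2)) l

/-- The iterated contraction is defined: at each step the image of the next edge is an
edge of the current second graph and is contractible in the current pair. -/
def DefinedGo [LinearOrder V] (f : V → V) (GG : SimpleGraph V × SimpleGraph V) :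
    List (V × V) → Prop
  | [] => True
  | e :: l => (GG.2.Adj (f e.1) (f e.2) ∧ ContractibleCond GG.1 GG.2 (f e.1) (f e.2)) ∧
      DefinedGo (minMerge (f e.1) (f e.2) ∘ f) (stepPair GG (f e.1, f e.2)) l

end ENPT

namespace SimpleGraph

variable {α : Type} {G : SimpleGraph α}

theorem Subgraph.isAcyclic_spanningCoe {H : G.Subgraph} (h : H.coe.IsAcyclic) :
    H.spanningCoe.IsAcyclic := by
  intro v c hc
  have hs : ∀ x ∈ c.support, x ∈ H.verts := by
    intro x hx
    obtain ⟨e, he, hxe⟩ := (Walk.mem_support_iff_exists_mem_edges_of_not_nil hc.not_nil).1 hx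
    exact H.mem_verts_of_mem_edge (c.edges_subset_edgeSet he) hxe
  let ι := Embedding.induce (G := H.spanningCoe) H.verts
  have hc' := (Walk.isCycle_map_iff_of_injective (f := ι.toHom) ι.injective).1
    ((c.map_induce hs).symm ▸ hc)
  exact h _ hc'

theorem Subgraph.Preconnected.exists_path_spanningCoe {C T : G.Subgraph} (hC : C.Preconnected)
    (hCT : C ≤ T) {u v : α} (hu : u ∈ C.verts) (hv : v ∈ C.verts) :
    ∃ π : T.spanningCoe.Path u v, ∀ e ∈ π.1.edges, e ∈ C.edgeSet := by
  classical
  obtain ⟨w, hw⟩ := (Subgraph.preconnected_iff_forall_exists_walk_subgraph C).1 hC hu hv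
  have hwC : ∀ e ∈ w.edges, e ∈ C.edgeSet :=
    fun e he => Subgraph.edgeSet_mono hw (w.mem_edges_toSubgraph.2 he)
  let w' := w.transfer T.spanningCoe fun e he => by
    rw [Subgraph.edgeSet_spanningCoe]; exact Subgraph.edgeSet_mono hCT (hwC e he)
  refine ⟨w'.toPath, fun e he => hwC e ?_⟩
  rw [← w.edges_transfer (H := T.spanningCoe)]
  exact w'.edges_toPath_subset_edges he

theorem Subgraph.exists_walk_edges_mem_inter {T C₁ C₂ : G.Subgraph} (hT : T.coe.IsAcyclic)
    (h₁ : C₁ ≤ T) (h₂ : C₂ ≤ T) (hc₁ : C₁.Preconnected) (hc₂ : C₂.Preconnected) {u v : α}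
    (hu₁ : u ∈ C₁.verts) (hv₁ : v ∈ C₁.verts) (hu₂ : u ∈ C₂.verts) (hv₂ : v ∈ C₂.verts) :
    ∃ w : G.Walk u v, ∀ e ∈ w.edges, e ∈ C₁.edgeSet ∧ e ∈ C₂.edgeSet := by
  obtain ⟨π₁, hπ₁⟩ := hc₁.exists_path_spanningCoe h₁ hu₁ hv₁
  obtain ⟨π₂, hπ₂⟩ := hc₂.exists_path_spanningCoe h₂ hu₂ hv₂
  obtain rfl : π₁ = π₂ := ((isAcyclic_spanningCoe hT).subsingleton_path u v).elim π₁ π₂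
  refine ⟨π₁.1.mapLe T.spanningCoe_le, fun e he => ?_⟩
  rw [Walk.edges_mapLe_eq_edges] at he
  exact ⟨hπ₁ e he, hπ₂ e he⟩

theorem Walk.exists_adj_mem_of_edges_subset_union {A B : Set (Sym2 α)} :
    ∀ {u v : α} (w : G.Walk u v), (∀ e ∈ w.edges, e ∈ A ∨ e ∈ B) → (∃ e ∈ w.edges, e ∈ B) →
      (∃ a, s(u, a) ∈ A) → ∃ x a b, s(x, a) ∈ A ∧ s(x, b) ∈ B
  | _, _, .nil, _, ⟨_, he, _⟩, _ => by simp at he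
  | u, _, .cons (v := x) _ w, hAB, hB, ⟨a, ha⟩ => by
    by_cases hux : s(u, x) ∈ B
    · exact ⟨u, a, x, ha, hux⟩
    · obtain ⟨e, he, heB⟩ := hB
      rw [Walk.edges_cons, List.mem_cons] at he
      refine exists_adj_mem_of_edges_subset_union w (fun e he => hAB e (by simp [he])) ?_ ⟨u, ?_⟩
      · exact ⟨e, he.resolve_left (by rintro rfl; exact hux heB), heB⟩
      · rw [Sym2.eq_swap]
        exact (hAB _ (by simp)).resolve_right hux

end SimpleGraph

namespace ENPT

variable {β : Type}

theorem EdgeInt.exists_adj {P Q : SubG β} (h : EdgeInt P Q) : ∃ a b, P.Adj a b ∧ Q.Adj a b := by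
  obtain ⟨e, hP, hQ⟩ := h
  induction e using Sym2.ind with
  | _ a b => exact ⟨a, b, hP, hQ⟩

theorem EdgeInt.connected_sup {P Q : SubG β} (h : EdgeInt P Q) (hP : P.Preconnected)
    (hQ : Q.Preconnected) : (P ⊔ Q).Connected := by
  obtain ⟨a, _, hPa, hQa⟩ := h.exists_adj
  exact Subgraph.connected_sup hP hQ ⟨a, hPa.fst_mem, hQa.fst_mem⟩

theorem eq_or_eq_of_notMem_split [Finite β] {P Q : SubG β} {w c₁ c₂ z : β}
    (hw : w ∉ Split P Q) (h₁ : (P ⊔ Q).Adj w c₁) (h₂ : (P ⊔ Q).Adj w c₂) (hc : c₁ ≠ c₂)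
    (hz : (P ⊔ Q).Adj w z) : z = c₁ ∨ z = c₂ := by
  by_contra! hne
  exact hw <| (Set.two_lt_ncard_iff).2 ⟨c₁, c₂, z, h₁, h₂, hz, hc, hne.1.symm, hne.2.symm⟩

theorem exists_adj_adj_of_edgeInt {T P Q : SubG β} (hT : T.coe.IsAcyclic) (hP : P ≤ T)
    (hQ : Q ≤ T) (hPc : P.Preconnected) (hQc : Q.Preconnected) (hPQ : EdgeInt P Q) {w : β}
    (hwP : w ∈ P.verts) (hwQ : w ∈ Q.verts) : ∃ b, P.Adj w b ∧ Q.Adj w b := by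
  obtain ⟨z, z', hPz, hQz⟩ := hPQ.exists_adj
  obtain ⟨W, hW⟩ := Subgraph.exists_walk_edges_mem_inter hT hP hQ hPc hQc hwP hPz.fst_mem hwQ
    hQz.fst_mem
  cases W with
  | nil => exact ⟨z', hPz, hQz⟩
  | @cons _ b _ _ W => exact ⟨b, hW s(w, b) (by simp)⟩

theorem NonSplit.false_of_exclusive_adj [Finite β] {T P Q : SubG β} (hT : T.coe.IsAcyclic)
    (hP : P ≤ T) (hQ : Q ≤ T) (hPc : P.Preconnected) (hQc : Q.Preconnected) (h : NonSplit P Q)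
    {w c₁ c₂ : β} (h₁ : P.Adj w c₁) (hn₁ : ¬Q.Adj w c₁) (h₂ : Q.Adj w c₂) (hn₂ : ¬P.Adj w c₂) :
    False := by
  obtain ⟨b, hbP, hbQ⟩ := exists_adj_adj_of_edgeInt hT hP hQ hPc hQc h.1 h₁.fst_mem h₂.fst_mem
  have hw : w ∉ Split P Q := h.2 ▸ Set.notMem_empty w
  have hc : c₁ ≠ c₂ := by rintro rfl; exact hn₁ h₂
  rcases eq_or_eq_of_notMem_split hw (.inl h₁) (.inr h₂) hc (.inl hbP) with rfl | rfl
  · exact hn₁ hbQ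
  · exact hn₂ hbP

theorem not_edgeInt_of_nonSplit [Finite β] {V : Type} {T : SubG β} {Ps : V → SubG β}
    (hT : T.coe.IsAcyclic) (hsub : ∀ v, Ps v ≤ T) (hconn : ∀ v, (Ps v).Preconnected)
    {p q x y : V} (hpq : NonSplit (Ps p) (Ps q))
    (hxp : EdgeInt (Ps x) (Ps p)) (hxq : ¬EdgeInt (Ps x) (Ps q))
    (hyq : EdgeInt (Ps y) (Ps q)) (hyp : ¬EdgeInt (Ps y) (Ps p)) :
    ¬EdgeInt (Ps x) (Ps y) := by
  intro hxy
  obtain ⟨u, u', huX, huP⟩ := hxp.exists_adj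
  obtain ⟨v, v', hvY, hvQ⟩ := hyq.exists_adj
  obtain ⟨W, hW⟩ := Subgraph.exists_walk_edges_mem_inter hT (sup_le (hsub x) (hsub y))
    (sup_le (hsub p) (hsub q)) (hxy.connected_sup (hconn x) (hconn y)).preconnected
    (hpq.1.connected_sup (hconn p) (hconn q)).preconnected
    (.inl huX.fst_mem) (.inr hvY.fst_mem) (.inl huP.fst_mem) (.inr hvQ.fst_mem)
  have hWedges : ∀ e ∈ (W.concat hvQ.adj_sub).edges, e ∈ (Ps x).edgeSet ∩ (Ps p).edgeSet ∨
      e ∈ (Ps y).edgeSet ∩ (Ps q).edgeSet := by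
    intro e he
    rw [Walk.edges_concat, List.concat_eq_append, List.mem_append, List.mem_singleton] at he
    obtain he | rfl := he
    · obtain ⟨heXY, hePQ⟩ := hW e he
      rw [Subgraph.edgeSet_sup] at heXY hePQ
      rcases heXY with heX | heY <;> rcases hePQ with heP | heQ
      · exact .inl ⟨heX, heP⟩
      · exact absurd ⟨e, heX, heQ⟩ hxq
      · exact absurd ⟨e, heY, heP⟩ hyp
      · exact .inr ⟨heY, heQ⟩
    · exact .inr ⟨hvY, hvQ⟩
  obtain ⟨w, c₁, c₂, h₁, h₂⟩ := Walk.exists_adj_mem_of_edges_subset_union _ hWedges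
    ⟨s(v, v'), by simp, hvY, hvQ⟩ ⟨u', huX, huP⟩
  exact hpq.false_of_exclusive_adj hT (hsub p) (hsub q) (hconn p) (hconn q)
    h₁.2 (fun h => hxq ⟨_, h₁.1, h⟩) h₂.2 (fun h => hyp ⟨_, h₂.1, h⟩)

section Representation

variable {V : Type} {T : SubG β} {Ps : V → SubG β} {G G' : SimpleGraph V}

theorem IsRep.adj_iff (hR : IsRep T Ps G G') {u v : V} :
    G.Adj u v ↔ u ≠ v ∧ EdgeInt (Ps u) (Ps v) := by
  rw [← hR.ept]; rfl

theorem IsRep.adj'_iff (hR : IsRep T Ps G G') {u v : V} :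
    G'.Adj u v ↔ u ≠ v ∧ NonSplit (Ps u) (Ps v) := by
  rw [← hR.enpt]; rfl

theorem IsRep.le (hR : IsRep T Ps G G') : G' ≤ G := fun _ _ h =>
  hR.adj_iff.2 ⟨(hR.adj'_iff.1 h).1, (hR.adj'_iff.1 h).2.1⟩

theorem IsRep.not_adj_of_exclusive_adj [Finite β] (hR : IsRep T Ps G G') {p q x y : V}
    (hpq : G'.Adj p q) (hpx : G.Adj p x) (hqx : ¬G.Adj q x) (hxq : x ≠ q)
    (hqy : G.Adj q y) (hpy : ¬G.Adj p y) (hyp : y ≠ p) : ¬G.Adj x y := fun hxy =>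
  not_edgeInt_of_nonSplit hR.tree.isAcyclic hR.sub (fun v => (hR.path v).1.preconnected)
    (hR.adj'_iff.1 hpq).2 (hR.adj_iff.1 hpx).2.symm
    (fun h => hqx (hR.adj_iff.2 ⟨hxq.symm, h.symm⟩)) (hR.adj_iff.1 hqy).2.symm
    (fun h => hpy (hR.adj_iff.2 ⟨hyp.symm, h.symm⟩)) (hR.adj_iff.1 hxy).2

theorem ContractibleEdge.symm {p q : V} (h : ContractibleEdge G G' p q) :
    ContractibleEdge G G' q p :=
  ⟨h.1.symm, fun r => ⟨(h.2 r).2, (h.2 r).1⟩⟩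

theorem IsRep.adj_of_contractibleEdge [Finite β] (hR : IsRep T Ps G G') {p q r v : V}
    (hcon : ContractibleEdge G G' p q) (hpr : G'.Adj p r) (hrq : r ≠ q) (hvp : v ≠ p)
    (hrv : v = r ∨ G.Adj r v) (hv : G.Adj p v ∨ G.Adj q v) :
    G.Adj p v ∧ (G'.Adj p v ∨ G'.Adj q v → G'.Adj p v) := by
  have hpv : G.Adj p v := by
    rcases hrv with rfl | hrv
    · exact hR.le hpr
    · by_contra hpv
      exact hR.not_adj_of_exclusive_adj hcon.1 (hR.le hpr) ((hcon.2 r).1 hpr hrq) hrq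
        (hv.resolve_left hpv) hpv hvp hrv
  exact ⟨hpv, fun h' => h'.resolve_right fun hqv => (hcon.2 v).2 hqv hvp hpv⟩

end Representation

section Contraction

variable {V : Type} [DecidableEq V] {p q : V}

theorem mergeMap_of_ne {x : V} (hx : x ≠ q) : mergeMap p q x = x := if_neg hx

theorem mergeMap_eq_iff {x u : V} (hu : u ≠ q) :
    mergeMap p q x = u ↔ x = u ∨ x = q ∧ u = p := by
  unfold mergeMap
  split_ifs with hx <;> grind

theorem contrG_adj_iff {H : SimpleGraph V} {u v : {x : V // x ≠ q}} :
    (contrG H p q).Adj u v ↔ u ≠ v ∧ ∃ x y, H.Adj x y ∧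
      (x = u ∨ x = q ∧ (u : V) = p) ∧ (y = v ∨ y = q ∧ (v : V) = p) := by
  simp only [contrG, eq_comm (a := (u : V)), eq_comm (a := (v : V)), mergeMap_eq_iff u.2,
    mergeMap_eq_iff v.2]

theorem contrG_adj_iff_of_ne {H : SimpleGraph V} {u v : {x : V // x ≠ q}} (hu : (u : V) ≠ p)
    (hv : (v : V) ≠ p) : (contrG H p q).Adj u v ↔ H.Adj u v := by
  rw [contrG_adj_iff]
  constructor
  · rintro ⟨-, x, y, h, hx, hy⟩
    rwa [hx.resolve_right (hu ·.2), hy.resolve_right (hv ·.2)] at h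
  · exact fun h => ⟨fun huv => H.loopless.irrefl _ (huv ▸ h), u, v, h, .inl rfl, .inl rfl⟩

theorem contrG_adj_iff_of_eq {H : SimpleGraph V} {u v : {x : V // x ≠ q}} (hu : (u : V) = p) :
    (contrG H p q).Adj u v ↔ (v : V) ≠ p ∧ (H.Adj p v ∨ H.Adj q v) := by
  rw [contrG_adj_iff]
  have hne : u ≠ v ↔ (v : V) ≠ p := by rw [ne_eq, Subtype.ext_iff, hu, eq_comm]
  constructor
  · rintro ⟨huv, x, y, h, hx, hy⟩
    have hvp := hne.1 huv
    rw [hy.resolve_right (hvp ·.2)] at h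
    rcases hx with rfl | ⟨rfl, -⟩
    · exact ⟨hvp, .inl (hu ▸ h)⟩
    · exact ⟨hvp, .inr h⟩
  · rintro ⟨hvp, h | h⟩
    · exact ⟨hne.2 hvp, p, v, h, .inl hu.symm, .inl rfl⟩
    · exact ⟨hne.2 hvp, q, v, h, .inr ⟨rfl, hu⟩, .inl rfl⟩

/-- `contrG _ p q` names the merged vertex `p`; `contrLift p q s` renames it `s`. -/
def contrLift (p q s : V) (u : {x : V // x ≠ q}) : V := if (u : V) = p then s else u

theorem mergeMap_contrLift {s : V} (hpq : p ≠ q) (hs : s = p ∨ s = q) (u : {x : V // x ≠ q}) :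
    mergeMap p q (contrLift p q s u) = u := by
  unfold contrLift
  split_ifs with hu
  · rcases hs with rfl | rfl
    · exact (mergeMap_of_ne hpq).trans hu.symm
    · exact (if_pos rfl).trans hu.symm
  · exact mergeMap_of_ne u.2

theorem contrG_adj_of_adj_contrLift {H : SimpleGraph V} {s : V} (hpq : p ≠ q)
    (hs : s = p ∨ s = q) {u v : {x : V // x ≠ q}}
    (h : H.Adj (contrLift p q s u) (contrLift p q s v)) : (contrG H p q).Adj u v :=
  ⟨by rintro rfl; exact H.loopless.irrefl _ h, _, _, h, (mergeMap_contrLift hpq hs u).symm,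
    (mergeMap_contrLift hpq hs v).symm⟩

def MergedLiftsTo (H : SimpleGraph V) (p q s : V) (Q : Set {x : V // x ≠ q}) : Prop :=
  ∀ u ∈ Q, ∀ v ∈ Q, (u : V) = p → (contrG H p q).Adj u v → H.Adj s v

theorem MergedLiftsTo.adj_contrLift {H : SimpleGraph V} {s : V} {Q : Set {x : V // x ≠ q}}
    (hQ : MergedLiftsTo H p q s Q) {u v : {x : V // x ≠ q}} (hu : u ∈ Q) (hv : v ∈ Q) (h : (contrG H p q).Adj u v) :
    H.Adj (contrLift p q s u) (contrLift p q s v) := by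
  unfold contrLift
  by_cases hup : (u : V) = p
  · rw [if_pos hup, if_neg ((contrG_adj_iff_of_eq hup).1 h).1]
    exact hQ u hu v hv hup h
  by_cases hvp : (v : V) = p
  · rw [if_neg hup, if_pos hvp]
    exact (hQ v hv u hu hvp h.symm).symm
  · rw [if_neg hup, if_neg hvp]
    exact (contrG_adj_iff_of_ne hup hvp).1 h

theorem IsRep.exists_mergedLiftsTo [Finite β] {T : SubG β} {Ps : V → SubG β} {G G' : SimpleGraph V}
    (hR : IsRep T Ps G G') (hcon : ContractibleEdge G G' p q) {Q : Set {x : V // x ≠ q}}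
    (hK4 : Q.Pairwise (contrG G p q).Adj) (hP4 : ∀ u ∈ Q, ∃ v ∈ Q, (contrG G' p q).Adj u v) :
    ∃ s, (s = p ∨ s = q) ∧ MergedLiftsTo G p q s Q ∧ MergedLiftsTo G' p q s Q := by
  by_cases hm : ∃ m ∈ Q, (m : V) = p
  swap
  · push Not at hm
    exact ⟨p, .inl rfl, fun u hu _ _ hup => absurd hup (hm u hu),
      fun u hu _ _ hup => absurd hup (hm u hu)⟩
  obtain ⟨m, hmQ, hmp⟩ := hm
  obtain ⟨r, hrQ, hmr⟩ := hP4 m hmQ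
  obtain ⟨hrp, hr'⟩ := (contrG_adj_iff_of_eq hmp).1 hmr
  suffices h : ∃ s, (s = p ∨ s = q) ∧ ∀ v : {x : V // x ≠ q}, (v : V) ≠ p →
      ((v : V) = r ∨ G.Adj r v) → (G.Adj p v ∨ G.Adj q v) →
      G.Adj s v ∧ (G'.Adj p v ∨ G'.Adj q v → G'.Adj s v) by
    obtain ⟨s, hs, h⟩ := h
    have hrv : ∀ v ∈ Q, (v : V) ≠ p → (v : V) = r ∨ G.Adj r v := by
      intro v hv hvp
      by_cases hvr : v = r
      · exact .inl (congrArg _ hvr)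
      · exact .inr ((contrG_adj_iff_of_ne hrp hvp).1 (hK4 hrQ hv (Ne.symm hvr)))
    refine ⟨s, hs, fun u _ v hv hup huv => ?_, fun u hu v hv hup huv => ?_⟩
    · obtain ⟨hvp, hG⟩ := (contrG_adj_iff_of_eq hup).1 huv
      exact (h v hvp (hrv v hv hvp) hG).1
    · obtain ⟨hvp, hG'⟩ := (contrG_adj_iff_of_eq hup).1 huv
      have hG := (contrG_adj_iff_of_eq hup).1 (hK4 hu hv (by rintro rfl; exact hvp hup))
      exact (h v hvp (hrv v hv hvp) hG.2).2 hG'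
  rcases hr' with hpr | hqr
  · exact ⟨p, .inl rfl, fun v hvp hrv hv => hR.adj_of_contractibleEdge hcon hpr r.2 hvp hrv hv⟩
  · refine ⟨q, .inr rfl, fun v hvp hrv hv => ?_⟩
    have h := hR.adj_of_contractibleEdge hcon.symm hqr hrp v.2 hrv hv.symm
    exact ⟨h.1, fun h' => h.2 h'.symm⟩

end Contraction

theorem stmt5_general {V : Type} [DecidableEq V]
    (G G' : SimpleGraph V)
    (hrep : ∃ (β : Type) (_ : Fintype β) (T : SubG β) (Ps : V → SubG β), IsRep T Ps G G')
    (hP2 : NoK4P4 G G')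
    (p q : V) (hcon : ContractibleEdge G G' p q) :
    NoK4P4 (contrG G p q) (contrG G' p q) := by
  obtain ⟨β, _, T, Ps, hR⟩ := hrep
  rintro ⟨a, b, c, d, gab, gac, gad, gbc, gbd, gcd, g'ab, g'bc, g'cd, n'ac, n'ad, n'bd⟩
  set Q : Set {x : V // x ≠ q} := {a, b, c, d}
  have hK4 : Q.Pairwise (contrG G p q).Adj := by
    simp only [Q, Set.Pairwise, Set.mem_insert_iff, Set.mem_singleton_iff]
    rintro u (rfl | rfl | rfl | rfl) v (rfl | rfl | rfl | rfl) huv <;>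
      first | exact absurd rfl huv | assumption | exact Adj.symm ‹_›
  have hP4 : ∀ u ∈ Q, ∃ v ∈ Q, (contrG G' p q).Adj u v := by
    simp only [Q, Set.mem_insert_iff, Set.mem_singleton_iff]
    rintro u (rfl | rfl | rfl | rfl)
    exacts [⟨b, by simp, g'ab⟩, ⟨c, by simp, g'bc⟩, ⟨d, by simp, g'cd⟩, ⟨c, by simp, g'cd.symm⟩]
  obtain ⟨s, hs, hG, hG'⟩ := hR.exists_mergedLiftsTo hcon hK4 hP4
  obtain ⟨ha, hb, hc, hd⟩ : a ∈ Q ∧ b ∈ Q ∧ c ∈ Q ∧ d ∈ Q := by simp [Q]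
  have unlift {u v} : ¬(contrG G' p q).Adj u v →
      ¬G'.Adj (contrLift p q s u) (contrLift p q s v) :=
    mt (contrG_adj_of_adj_contrLift hcon.1.ne hs)
  exact hP2 ⟨_, _, _, _, hG.adj_contrLift ha hb gab, hG.adj_contrLift ha hc gac,
    hG.adj_contrLift ha hd gad, hG.adj_contrLift hb hc gbc, hG.adj_contrLift hb hd gbd,
    hG.adj_contrLift hc hd gcd, hG'.adj_contrLift ha hb g'ab, hG'.adj_contrLift hb hc g'bc,
    hG'.adj_contrLift hc hd g'cd, unlift n'ac, unlift n'ad, unlift n'bd⟩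

/-- contraction preserves property (P2). -/
theorem stmt5 {V : Type} [Fintype V] [DecidableEq V]
    (G G' : SimpleGraph V) (hle : G' ≤ G)
    (hrep : ∃ (β : Type) (_ : Fintype β) (T : SubG β) (Ps : V → SubG β), IsRep T Ps G G')
    (hP2 : NoK4P4 G G')
    (p q : V) (hcon : ContractibleEdge G G' p q) :
    NoK4P4 (contrG G p q) (contrG G' p q) :=
  stmt5_general G G' hrep hP2 p q hcon

end ENPT
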